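/- Let K be a field, X* = A_1 × ... × A_n ⊂ K^n with 2 ≤ d_i = |A_i| ≤ d_{i+1} for all i, and let d satisfy 1 ≤ d ≤ Σ_{i=1}^{n}(d_i − 1) − 1, with the unique decomposition d = Σ_{i=1}^{k}(d_i − 1) + ℓ, 1 ≤ ℓ ≤ d_{k+1} − 1, k ≥ 0. Then the minimum distance of the cartesian evaluation code C_{X*}(d) equals (d_{k+1} − ℓ) · d_{k+2} ⋯ d_n. -/

import Mathlib

/-!
Lower bound (Alon–Füredi). Reducing `f` modulo the polynomials `∏_{a ∈ Aᵢ} (Xᵢ - a)` does not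
raise its degree and does not change it on the grid, and a reduced `f ≠ 0` is nonzero somewhere
on the grid. For reduced `f`, let `g` be its leading coefficient in `X₀`, of degree `e < c₀`:
above each of the points of the smaller grid where `g` does not vanish, `f` has at least
`c₀ - e` nonzero values. By induction, `f` is nonzero at `∏ yᵢ` points or more for some profile
`1 ≤ yᵢ ≤ cᵢ` with `∑ (cᵢ - yᵢ) ≤ d`.

Among such profiles, moving mass from a coordinate `i < k` with `yᵢ > 1` to a coordinate
`j ≥ k` with `yⱼ < cⱼ` does not increase `∏ yᵢ`, so the minimum is reached when `yᵢ = 1` for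
all `i < k`; then the coordinates `j ≥ k`, all of size at least `c_k`, lose at most `ℓ` in total,
which costs at most a factor `1 - ℓ / c_k`.

Upper bound: a product of linear forms `Xᵢ - a` vanishing on all but one point of `Aᵢ` for
`i < k` and on `ℓ` points of `A_k` realizes this minimum.
-/

open Finset MvPolynomial

section Combinatorics

variable {ι : Type*}

/-- In words: `∏ y ≥ (1 - S / m) ∏ c`. -/
theorem mul_prod_le_mul_prod_add_mul_prod (s : Finset ι) {c y : ι → ℕ} {m S : ℕ}
    (hm : ∀ i ∈ s, m ≤ c i) (hy : ∀ i ∈ s, y i ≤ c i)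
    (hsum : ∑ i ∈ s, c i ≤ S + ∑ i ∈ s, y i) (hS : S ≤ m) :
    m * ∏ i ∈ s, c i ≤ m * ∏ i ∈ s, y i + S * ∏ i ∈ s, c i := by
  classical
  induction s using Finset.induction generalizing S with
  | empty => simp
  | @insert t s ht ih =>
    rw [sum_insert ht, sum_insert ht] at hsum
    rw [prod_insert ht, prod_insert ht]
    have hmt := hm t (mem_insert_self t s)
    have hyt := hy t (mem_insert_self t s)
    have hys : ∑ i ∈ s, y i ≤ ∑ i ∈ s, c i :=
      sum_le_sum fun i hi => hy i (mem_insert_of_mem hi)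
    have ih' := ih (S := S - (c t - y t)) (fun i hi => hm i (mem_insert_of_mem hi))
      (fun i hi => hy i (mem_insert_of_mem hi)) (by omega) (by omega)
    set P := ∏ i ∈ s, c i
    obtain ⟨u, hu⟩ : ∃ u, c t = y t + u := ⟨c t - y t, by omega⟩
    obtain ⟨S', hS'⟩ : ∃ S', S = S' + u := ⟨S - u, by omega⟩
    rw [hu, hS', Nat.add_sub_cancel_left, Nat.add_sub_cancel] at ih'
    have hmu : m ≤ y t + u := hu ▸ hmt
    rw [hu, hS']
    nlinarith [Nat.mul_le_mul_left (y t) ih', Nat.mul_le_mul_left (u * P) hmu,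
      Nat.zero_le (S' * u * P)]

variable [Fintype ι]

@[to_additive]
theorem Finset.prod_update_update_mul {M : Type*} [CommMonoid M] [DecidableEq ι]
    (f : ι → M) {i j : ι} (hij : i ≠ j) (a b : M) :
    (∏ t, Function.update (Function.update f i a) j b t) * (f i * f j) =
      (∏ t, f t) * (a * b) := by
  have hi : i ∈ (univ : Finset ι) \ {j} := by simp [hij]
  rw [prod_update_of_mem (mem_univ j), prod_update_of_mem hi, ← mul_prod_erase _ f (mem_univ j),
    ← mul_prod_erase _ f (mem_erase_of_ne_of_mem hij (mem_univ i))]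
  simp only [sdiff_singleton_eq_erase]
  ac_rfl

section LinearOrder

variable [LinearOrder ι]

@[to_additive]
theorem Finset.prod_filter_lt_mul_prod_filter_le {M : Type*} [CommMonoid M] (g : ι → M)
    (k : ι) : (∏ i ∈ {i | i < k}, g i) * ∏ i ∈ {i | k ≤ i}, g i = ∏ i, g i := by
  simpa only [not_lt] using prod_filter_mul_prod_filter_not univ (· < k) g

@[to_additive]
theorem Finset.prod_filter_le_eq_mul_prod_filter_lt {M : Type*} [CommMonoid M] (g : ι → M)
    (k : ι) : ∏ i ∈ {i | k ≤ i}, g i = g k * ∏ i ∈ {i | k < i}, g i := by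
  have : univ.filter (k ≤ ·) = insert k (univ.filter (k < ·)) := by
    ext i
    simp [le_iff_eq_or_lt, eq_comm]
  rw [this, prod_insert (by simp)]

end LinearOrder

/-- For `cᵢ = #Aᵢ`, the Alon–Füredi theorem bounds the number of points of the grid `∏ Aᵢ` where
a polynomial of degree at most `d` does not vanish from below by the least `∏ yᵢ` over these
profiles `y`. -/
structure IsAlonFurediProfile (c : ι → ℕ) (d : ℕ) (y : ι → ℕ) : Prop where
  one_le : ∀ i, 1 ≤ y i
  le : ∀ i, y i ≤ c i
  sum_le : ∑ i, c i ≤ d + ∑ i, y i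

namespace IsAlonFurediProfile

variable {c y : ι → ℕ} {d : ℕ}

theorem mono {d' : ℕ} (hy : IsAlonFurediProfile c d y) (h : d ≤ d') :
    IsAlonFurediProfile c d' y :=
  ⟨hy.one_le, hy.le, hy.sum_le.trans (by omega)⟩

/-- Moving as much as possible of `y i` onto `y j` keeps the sum and does not increase the
product. -/
theorem exists_exchange [DecidableEq ι] (hy : IsAlonFurediProfile c d y) {i j : ι} (hij : i ≠ j)
    (hc : c i ≤ c j) (hi : 1 < y i) (hj : y j < c j) :
    ∃ y', IsAlonFurediProfile c d y' ∧ y' i < y i ∧ (∀ t, t ≠ i → t ≠ j → y' t = y t) ∧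
      ∏ t, y' t ≤ ∏ t, y t := by
  set a := max 1 (y i + y j - c j)
  set b := y i + y j - a
  have hyi := hy.le i
  have hyj := hy.one_le j
  have ha : a < y i := max_lt hi (by omega)
  have haj : a ≤ y j := max_le hyj (by omega)
  have hab : a + b = y i + y j := by omega
  have hbj : y i + y j - c j ≤ a := le_max_right _ _
  set y' := Function.update (Function.update y i a) j b
  have hy'i : y' i = a := by simp [y', Function.update_of_ne hij]
  have hy'j : y' j = b := by simp [y']
  have hy't : ∀ t, t ≠ i → t ≠ j → y' t = y t := fun t hti htj => by simp [y', hti, htj]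
  have hsum : ∑ t, y' t + (y i + y j) = ∑ t, y t + (a + b) := sum_update_update_add y hij a b
  have hprod : (∏ t, y' t) * (y i * y j) = (∏ t, y t) * (a * b) :=
    prod_update_update_mul y hij a b
  refine ⟨y', ⟨fun t => ?_, fun t => ?_, ?_⟩, hy'i ▸ ha, hy't, ?_⟩
  · rcases eq_or_ne t i with rfl | hti
    · rw [hy'i]
      exact le_max_left _ _
    rcases eq_or_ne t j with rfl | htj
    · rw [hy'j]
      omega
    · rw [hy't t hti htj]
      exact hy.one_le t
  · rcases eq_or_ne t i with rfl | hti
    · rw [hy'i]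
      omega
    rcases eq_or_ne t j with rfl | htj
    · rw [hy'j]
      omega
    · rw [hy't t hti htj]
      exact hy.le t
  · have := hy.sum_le
    omega
  · have hmul : a * b ≤ y i * y j := by
      obtain ⟨p, hp⟩ : ∃ p, y j = a + p := ⟨y j - a, by omega⟩
      rw [show b = y i + p by omega, hp]
      nlinarith [Nat.mul_le_mul_right p ha.le]
    have hpos : 0 < y i * y j := Nat.mul_pos (by omega) (by omega)
    exact Nat.le_of_mul_le_mul_right (hprod.trans_le (Nat.mul_le_mul_left _ hmul)) hpos

variable [LinearOrder ι] {k : ι} {ℓ : ℕ}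

theorem sub_mul_prod_le_prod_of_eq_one
    (hy : IsAlonFurediProfile c (∑ i ∈ {i | i < k}, (c i - 1) + ℓ) y) (hc : Monotone c)
    (hℓ : ℓ < c k) (hone : ∀ i < k, y i = 1) :
    (c k - ℓ) * ∏ i ∈ {i | k < i}, c i ≤ ∏ i, y i := by
  have hlow : ∑ i ∈ {i | i < k}, (c i - 1) + ∑ i ∈ {i | i < k}, y i =
      ∑ i ∈ {i | i < k}, c i := by
    rw [← sum_add_distrib]
    refine sum_congr rfl fun i hi => ?_
    have := hy.le i
    have := hone i (by simpa using hi)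
    omega
  have hsum := hy.sum_le
  rw [← sum_filter_lt_add_sum_filter_le c k, ← sum_filter_lt_add_sum_filter_le y k] at hsum
  have hprod_le := mul_prod_le_mul_prod_add_mul_prod {i | k ≤ i} (m := c k) (S := ℓ)
    (fun i hi => hc (by simpa using hi)) (fun i _ => hy.le i) (by omega) hℓ.le
  have hprod_y : ∏ i, y i = ∏ i ∈ {i | k ≤ i}, y i := by
    rw [← prod_filter_lt_mul_prod_filter_le y k,
      prod_eq_one fun i hi => hone i (by simpa using hi), one_mul]
  rw [prod_filter_le_eq_mul_prod_filter_lt c k] at hprod_le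
  rw [hprod_y, Nat.sub_mul]
  set P := ∏ i ∈ {i | k < i}, c i
  have : c k * P ≤ ∏ i ∈ {i | k ≤ i}, y i + ℓ * P :=
    Nat.le_of_mul_le_mul_left (by linarith) (by omega : 0 < c k)
  omega

theorem sub_mul_prod_le_prod
    (hy : IsAlonFurediProfile c (∑ i ∈ {i | i < k}, (c i - 1) + ℓ) y) (hc : Monotone c)
    (hℓ : ℓ < c k) :
    (c k - ℓ) * ∏ i ∈ {i | k < i}, c i ≤ ∏ i, y i := by
  induction hN : ∑ i ∈ {i | i < k}, y i using Nat.strong_induction_on generalizing y with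
  | _ N ih =>
  by_cases hone : ∀ i < k, y i = 1
  · exact hy.sub_mul_prod_le_prod_of_eq_one hc hℓ hone
  by_cases hfull : ∀ j, k ≤ j → y j = c j
  · calc (c k - ℓ) * ∏ i ∈ {i | k < i}, c i ≤ c k * ∏ i ∈ {i | k < i}, c i :=
          Nat.mul_le_mul_right _ (Nat.sub_le _ _)
      _ = ∏ i ∈ {i | k ≤ i}, y i := by
          rw [← prod_filter_le_eq_mul_prod_filter_lt]
          exact prod_congr rfl fun j hj => (hfull j (by simpa using hj)).symm
      _ ≤ ∏ i, y i :=
          prod_le_prod_of_subset_of_one_le' (subset_univ _) fun i _ _ => hy.one_le i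
  push Not at hone hfull
  obtain ⟨i, hik, hi⟩ := hone
  obtain ⟨j, hkj, hj⟩ := hfull
  obtain ⟨y', hy', hy'i, hy't, hprod⟩ := hy.exists_exchange (hik.trans_le hkj).ne
    (hc (hik.trans_le hkj).le) (by have := hy.one_le i; omega) ((hy.le j).lt_of_ne hj)
  have hlt : ∑ t ∈ {t | t < k}, y' t < N := by
    refine hN ▸ sum_lt_sum (fun t ht => ?_) ⟨i, by simpa using hik, hy'i⟩
    rcases eq_or_ne t i with rfl | hti
    · exact hy'i.le
    · have htj : t ≠ j := by
        rintro rfl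
        exact (not_le.mpr (by simpa using ht)) hkj
      exact (hy't t hti htj).le
  exact (ih _ hlt hy' rfl).trans hprod

end IsAlonFurediProfile

section Greedy

variable [LinearOrder ι] (c : ι → ℕ) (k : ι) (ℓ : ℕ)

def greedyProfile (i : ι) : ℕ :=
  if i < k then 1 else if i = k then c k - ℓ else c i

variable {c k ℓ}

omit [Fintype ι] in
theorem greedyProfile_le (hc : ∀ i < k, 1 ≤ c i) (i : ι) : greedyProfile c k ℓ i ≤ c i := by
  unfold greedyProfile
  split_ifs with hik hik'
  exacts [hc i hik, hik' ▸ Nat.sub_le _ _, le_rfl]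

theorem sum_sub_greedyProfile (hℓ : ℓ ≤ c k) :
    ∑ i, (c i - greedyProfile c k ℓ i) = ∑ i ∈ {i | i < k}, (c i - 1) + ℓ := by
  have hlt : ∀ i ∈ ({i | i < k} : Finset ι), c i - greedyProfile c k ℓ i = c i - 1 := by
    intro i hi
    rw [greedyProfile, if_pos (by simpa using hi)]
  have hgt : ∀ i ∈ ({i | k < i} : Finset ι), c i - greedyProfile c k ℓ i = 0 := by
    intro i hi
    have hi : k < i := by simpa using hi
    rw [greedyProfile, if_neg (lt_asymm hi), if_neg hi.ne', Nat.sub_self]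
  rw [← sum_filter_lt_add_sum_filter_le _ k, sum_filter_le_eq_add_sum_filter_lt,
    sum_congr rfl hlt, sum_congr rfl hgt, greedyProfile, if_neg (lt_irrefl k), if_pos rfl,
    sum_const_zero]
  omega

theorem prod_greedyProfile :
    ∏ i, greedyProfile c k ℓ i = (c k - ℓ) * ∏ i ∈ {i | k < i}, c i := by
  have hlt : ∀ i ∈ ({i | i < k} : Finset ι), greedyProfile c k ℓ i = 1 := by
    intro i hi
    rw [greedyProfile, if_pos (by simpa using hi)]
  have hgt : ∀ i ∈ ({i | k < i} : Finset ι), greedyProfile c k ℓ i = c i := by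
    intro i hi
    have hi : k < i := by simpa using hi
    rw [greedyProfile, if_neg (lt_asymm hi), if_neg hi.ne']
  rw [← prod_filter_lt_mul_prod_filter_le _ k, prod_filter_le_eq_mul_prod_filter_lt,
    prod_eq_one hlt, prod_congr rfl hgt, greedyProfile, if_neg (lt_irrefl k), if_pos rfl, one_mul]

end Greedy

end Combinatorics

section Grid

variable {R : Type*} [CommRing R]

theorem Polynomial.card_sub_natDegree_le_card_filter_eval_ne_zero [IsDomain R] [DecidableEq R]
    {p : Polynomial R} (hp : p ≠ 0) (s : Finset R) :
    #s - p.natDegree ≤ #{a ∈ s | p.eval a ≠ 0} := by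
  have hroots : #{a ∈ s | p.eval a = 0} ≤ p.natDegree :=
    Polynomial.card_le_degree_of_subset_roots fun a ha =>
      (Polynomial.mem_roots hp).2 (mem_filter.1 ha).2
  have := card_filter_add_card_filter_not (s := s) (p := fun a => p.eval a = 0)
  simp only [← ne_eq] at this
  omega

theorem mul_card_le_card_filter_piFinset {n : ℕ} {α : Type*} (A : Fin (n + 1) → Finset α)
    (P : (Fin (n + 1) → α) → Prop) [DecidablePred P] (U : Finset (Fin n → α))
    (hU : U ⊆ Fintype.piFinset (Fin.tail A)) (m : ℕ)
    (hm : ∀ u ∈ U, m ≤ #{a ∈ A 0 | P (Fin.cons a u)}) :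
    m * #U ≤ #{x ∈ Fintype.piFinset A | P x} := by
  calc m * #U = ∑ _u ∈ U, m := by rw [sum_const, smul_eq_mul, mul_comm]
    _ ≤ ∑ u ∈ U, #{a ∈ A 0 | P (Fin.cons a u)} := sum_le_sum hm
    _ = #(U.sigma fun u => {a ∈ A 0 | P (Fin.cons a u)}) := (card_sigma _ _).symm
    _ ≤ #{x ∈ Fintype.piFinset A | P x} := by
      refine card_le_card_of_injOn (fun p => Fin.cons p.2 p.1) (fun p hp => ?_)
        fun p _ q _ h => ?_
      · obtain ⟨hu, ha⟩ := mem_sigma.1 hp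
        obtain ⟨ha, hP⟩ := mem_filter.1 ha
        refine mem_filter.2 ⟨Fin.mem_piFinset_iff_zero_tail.2 ?_, hP⟩
        simp only [Fin.cons_zero, Fin.tail_cons]
        exact ⟨ha, hU hu⟩
      · obtain ⟨h1, h2⟩ := Fin.cons_inj.1 h
        exact Sigma.ext h2 (heq_of_eq h1)

theorem MvPolynomial.exists_totalDegree_le_degreeOf_lt_eval_eq {σ : Type*} [Finite σ]
    [Nontrivial R] (A : σ → Finset R) (hA : ∀ i, (A i).Nonempty) (f : MvPolynomial σ R) :
    ∃ r : MvPolynomial σ R, r.totalDegree ≤ f.totalDegree ∧ (∀ i, r.degreeOf i < #(A i)) ∧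
      ∀ x : σ → R, (∀ i, x i ∈ A i) → eval x r = eval x f := by
  let _ : LinearOrder σ := WellOrderingRel.isWellOrder.linearOrder
  set P : σ → MvPolynomial σ R := fun i => ∏ a ∈ A i, (X i - C a)
  have hPmonic : ∀ i, MonomialOrder.degLex.Monic (P i) := fun i =>
    MonomialOrder.Monic.prod fun a _ => MonomialOrder.degLex.monic_X_sub_C i a
  have hPdeg : ∀ i, MonomialOrder.degLex.degree (P i) = Finsupp.single i #(A i) := fun i => by
    rw [MonomialOrder.degree_prod_of_regular fun a _ => by
      rw [MonomialOrder.degLex.monic_X_sub_C i a]; exact isRegular_one]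
    simp [MonomialOrder.degLex.degree_X_sub_C]
  obtain ⟨g, r, hf, hg, hr⟩ := MonomialOrder.degLex.div (b := P)
    (fun i => by simp [(hPmonic i).leadingCoeff_eq_one]) f
  refine ⟨r, ?_, fun i => ?_, fun x hx => ?_⟩
  · rw [eq_sub_of_add_eq' hf.symm]
    refine (totalDegree_sub _ _).trans (max_le le_rfl ?_)
    rw [Finsupp.linearCombination_apply, Finsupp.sum]
    refine (totalDegree_finsetSum _ _).trans (Finset.sup_le fun i _ => ?_)
    rw [smul_eq_mul, mul_comm]
    exact degLex_totalDegree_monotone (hg i)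
  · rw [degreeOf_lt_iff (card_pos.mpr (hA i))]
    intro m hm
    have := hr m hm i
    rw [hPdeg, Finsupp.single_le_iff] at this
    omega
  · rw [hf, map_add, right_eq_add, Finsupp.linearCombination_apply, map_finsuppSum]
    refine Finset.sum_eq_zero fun i _ => ?_
    simp only [smul_eq_mul, map_mul, P, map_prod, map_sub, eval_X, eval_C]
    rw [prod_eq_zero (hx i) (sub_self _), mul_zero]

theorem MvPolynomial.exists_mem_piFinset_eval_ne_zero [IsDomain R] {σ : Type*} [Fintype σ]
    [DecidableEq σ] (A : σ → Finset R) {f : MvPolynomial σ R} (hf : f ≠ 0)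
    (hdeg : ∀ i, f.degreeOf i < #(A i)) : ∃ x ∈ Fintype.piFinset A, eval x f ≠ 0 := by
  by_contra! h
  exact hf (eq_zero_of_eval_zero_at_prod_finset f A hdeg fun x hx =>
    h x (Fintype.mem_piFinset.2 hx))

theorem exists_isAlonFurediProfile_prod_le_card_of_degreeOf_lt [IsDomain R] [DecidableEq R] :
    ∀ {n : ℕ} (A : Fin n → Finset R) {f : MvPolynomial (Fin n) R}, f ≠ 0 →
      (∀ i, f.degreeOf i < #(A i)) →
      ∃ y, IsAlonFurediProfile (fun i => #(A i)) f.totalDegree y ∧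
        ∏ i, y i ≤ #{x ∈ Fintype.piFinset A | eval x f ≠ 0}
  | 0, A, f, hf, hdeg => by
    refine ⟨fun i => i.elim0, ⟨fun i => i.elim0, fun i => i.elim0, by simp⟩, ?_⟩
    obtain ⟨x, hx, hfx⟩ := exists_mem_piFinset_eval_ne_zero A hf hdeg
    simpa using card_pos.2 ⟨x, mem_filter.2 ⟨hx, hfx⟩⟩
  | n + 1, A, f, hf, hdeg => by
    set F := finSuccEquiv R n f
    have hF : F ≠ 0 := by simpa [F] using hf
    set e := F.natDegree
    set g := F.leadingCoeff
    have hg : g ≠ 0 := Polynomial.leadingCoeff_ne_zero.2 hF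
    have he : e < #(A 0) := (natDegree_finSuccEquiv f).trans_lt (hdeg 0)
    have hgdeg : g.totalDegree + e ≤ f.totalDegree := totalDegree_coeff_finSuccEquiv_add_le f e hg
    obtain ⟨y, hy, hprod⟩ := exists_isAlonFurediProfile_prod_le_card_of_degreeOf_lt (Fin.tail A)
      hg fun i => (degreeOf_coeff_finSuccEquiv f i e).trans_lt (hdeg i.succ)
    have hfiber : ∀ u ∈ {u ∈ Fintype.piFinset (Fin.tail A) | eval u g ≠ 0},
        #(A 0) - e ≤ #{a ∈ A 0 | eval (Fin.cons a u) f ≠ 0} := by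
      intro u hu
      set p := F.map (eval u)
      have hpe : p.coeff e = eval u g := Polynomial.coeff_map _ _
      have hp : p ≠ 0 := fun h => (mem_filter.1 hu).2 <| by
        rw [← hpe, h, Polynomial.coeff_zero]
      simp_rw [eval_eq_eval_mv_eval']
      exact (Nat.sub_le_sub_left Polynomial.natDegree_map_le _).trans
        (Polynomial.card_sub_natDegree_le_card_filter_eval_ne_zero hp (A 0))
    refine ⟨Fin.cons (#(A 0) - e) y, ⟨Fin.cases (by simp; omega) hy.one_le,
      Fin.cases (by simp) hy.le, ?_⟩, ?_⟩
    · have := hy.sum_le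
      simp only [Fin.sum_univ_succ, Fin.cons_zero, Fin.cons_succ]
      simp only [Fin.tail] at this
      omega
    · rw [Fin.prod_univ_succ, Fin.cons_zero]
      simp only [Fin.cons_succ]
      exact (Nat.mul_le_mul_left _ hprod).trans
        (mul_card_le_card_filter_piFinset A _ _ (filter_subset _ _) _ hfiber)

theorem exists_isAlonFurediProfile_prod_le_card [IsDomain R] [DecidableEq R] {n : ℕ}
    (A : Fin n → Finset R) {f : MvPolynomial (Fin n) R}
    (hf : ∃ x ∈ Fintype.piFinset A, eval x f ≠ 0) :
    ∃ y, IsAlonFurediProfile (fun i => #(A i)) f.totalDegree y ∧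
      ∏ i, y i ≤ #{x ∈ Fintype.piFinset A | eval x f ≠ 0} := by
  obtain ⟨x, hx, hfx⟩ := hf
  rw [Fintype.mem_piFinset] at hx
  obtain ⟨r, hrdeg, hrA, hr⟩ :=
    exists_totalDegree_le_degreeOf_lt_eval_eq A (fun i => ⟨x i, hx i⟩) f
  have hr0 : r ≠ 0 := by
    rintro rfl
    exact hfx (by rw [← hr x hx, map_zero])
  obtain ⟨y, hy, hprod⟩ := exists_isAlonFurediProfile_prod_le_card_of_degreeOf_lt A hr0 hrA
  refine ⟨y, hy.mono hrdeg, hprod.trans_eq (congrArg card (filter_congr fun x hx => ?_))⟩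
  rw [hr x (Fintype.mem_piFinset.1 hx)]

theorem exists_card_filter_eval_ne_zero_eq_prod [IsDomain R] [DecidableEq R] {σ : Type*}
    [Fintype σ] [DecidableEq σ] (A : σ → Finset R) (y : σ → ℕ) (hy : ∀ i, y i ≤ #(A i)) :
    ∃ f : MvPolynomial σ R, f.totalDegree ≤ ∑ i, (#(A i) - y i) ∧
      #{x ∈ Fintype.piFinset A | eval x f ≠ 0} = ∏ i, y i := by
  choose Z hZA hZ using fun i => exists_subset_card_eq (Nat.sub_le #(A i) (y i))
  refine ⟨∏ i, ∏ a ∈ Z i, (X i - C a), ?_, ?_⟩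
  · refine (totalDegree_finsetProd _ _).trans (sum_le_sum fun i _ => ?_)
    refine (totalDegree_finsetProd _ _).trans ?_
    rw [← hZ i, card_eq_sum_ones]
    refine sum_le_sum fun a _ => (totalDegree_sub _ _).trans ?_
    simp
  · have : {x ∈ Fintype.piFinset A | eval x (∏ i, ∏ a ∈ Z i, (X i - C a)) ≠ 0} =
        Fintype.piFinset fun i => A i \ Z i := by
      ext x
      simp [prod_ne_zero_iff, sub_eq_zero, forall_and]
    rw [this, Fintype.card_piFinset]
    refine prod_congr rfl fun i _ => ?_
    rw [card_sdiff_of_subset (hZA i), hZ i]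
    have := hy i
    omega

end Grid

theorem stmt_9_general {K : Type*} [Field K] [DecidableEq K] (n : ℕ) (A : Fin n → Finset K)
    (hA : ∀ i, 2 ≤ (A i).card)
    (hmono : ∀ i j : Fin n, i ≤ j → (A i).card ≤ (A j).card)
    (d k ℓ : ℕ)
    (hk : k < n)
    (hdecomp : d = (∑ i ∈ Finset.univ.filter (fun i : Fin n => (i : ℕ) < k),
        ((A i).card - 1)) + ℓ)
    (hl1 : 1 ≤ ℓ) (hl2 : ℓ ≤ (A ⟨k, hk⟩).card - 1) :
    IsLeast
      {w : ℕ | ∃ f : MvPolynomial (Fin n) K, f.totalDegree ≤ d ∧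
        (∃ x ∈ Fintype.piFinset A, MvPolynomial.eval x f ≠ 0) ∧
        w = ((Fintype.piFinset A).filter fun x => MvPolynomial.eval x f ≠ 0).card}
      (((A ⟨k, hk⟩).card - ℓ) *
        ∏ i ∈ Finset.univ.filter (fun i : Fin n => k < (i : ℕ)), (A i).card) := by
  have hlt : univ.filter (fun i : Fin n => (i : ℕ) < k) = ({i | i < ⟨k, hk⟩} : Finset (Fin n)) := by
    ext i
    simp [Fin.lt_def]
  have hgt : univ.filter (fun i : Fin n => k < (i : ℕ)) = ({i | ⟨k, hk⟩ < i} : Finset (Fin n)) := by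
    ext i
    simp [Fin.lt_def]
  have hℓ : ℓ < #(A ⟨k, hk⟩) := by omega
  rw [hlt] at hdecomp
  rw [hgt]
  refine ⟨?_, ?_⟩
  · obtain ⟨f, hfdeg, hfcard⟩ := exists_card_filter_eval_ne_zero_eq_prod A
      (greedyProfile (fun i => #(A i)) ⟨k, hk⟩ ℓ)
      (greedyProfile_le fun i _ => by have := hA i; omega)
    rw [prod_greedyProfile] at hfcard
    have hpos : 0 < (#(A ⟨k, hk⟩) - ℓ) * ∏ i ∈ {i | ⟨k, hk⟩ < i}, #(A i) :=
      Nat.mul_pos (by omega) (prod_pos fun i _ => by have := hA i; omega)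
    obtain ⟨x, hx⟩ := card_pos.1 (hfcard ▸ hpos)
    refine ⟨f, ?_, ⟨x, mem_filter.1 hx⟩, hfcard.symm⟩
    rw [hdecomp, ← sum_sub_greedyProfile (c := fun i => #(A i)) hℓ.le]
    exact hfdeg
  · rintro w ⟨f, hdeg, hnz, rfl⟩
    obtain ⟨y, hy, hprod⟩ := exists_isAlonFurediProfile_prod_le_card A hnz
    exact ((hy.mono (hdeg.trans hdecomp.le)).sub_mul_prod_le_prod
      (fun i j hij => hmono i j hij) hℓ).trans hprod

theorem stmt_9 {K : Type*} [Field K] [DecidableEq K] (n : ℕ) (A : Fin n → Finset K)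
    (hA : ∀ i, 2 ≤ (A i).card)
    (hmono : ∀ i j : Fin n, i ≤ j → (A i).card ≤ (A j).card)
    (d k ℓ : ℕ) (hd1 : 1 ≤ d)
    (hd2 : d ≤ (∑ i, ((A i).card - 1)) - 1)
    (hk : k < n)
    (hdecomp : d = (∑ i ∈ Finset.univ.filter (fun i : Fin n => (i : ℕ) < k),
        ((A i).card - 1)) + ℓ)
    (hl1 : 1 ≤ ℓ) (hl2 : ℓ ≤ (A ⟨k, hk⟩).card - 1) :
    IsLeast
      {w : ℕ | ∃ f : MvPolynomial (Fin n) K, f.totalDegree ≤ d ∧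
        (∃ x ∈ Fintype.piFinset A, MvPolynomial.eval x f ≠ 0) ∧
        w = ((Fintype.piFinset A).filter fun x => MvPolynomial.eval x f ≠ 0).card}
      (((A ⟨k, hk⟩).card - ℓ) *
        ∏ i ∈ Finset.univ.filter (fun i : Fin n => k < (i : ℕ)), (A i).card) :=
  stmt_9_general n A hA hmono d k ℓ hk hdecomp hl1 hl2
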